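/- Let I' = ⟨J, F₁, F₂, ∂(F₁,J)/∂(x₁,x₂), ∂(F₂,J)/∂(x₁,x₂)⟩ and suppose dim_ℝ O₃/I' < ∞. Define J'(t,x) = J(t²,x) and F_i'(t,x) = F_i(t²,x). Then both V(J,F₁,F₂) and V(J',F₁',F₂') are curves with an algebraically isolated singularity at the origin; that is, the ideal L₀ generated by J, F₁, F₂ and all 2×2 minors of the Jacobian matrix of (J,F₁,F₂) with respect to (t,x₁,x₂) satisfies dim_ℝ O₃/L₀ < ∞, and the ideal L generated by J', F₁', F₂' and all 2×2 minors of the Jacobian matrix of (J',F₁',F₂') with respect to (t,x₁,x₂) satisfies dim_ℝ O₃/L < ∞. -/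

import Mathlib

open Filter Topology

noncomputable section

set_option synthInstance.maxHeartbeats 1000000
set_option maxHeartbeats 1000000

/-- The scalar action of `ℝ` on germs of real functions makes the germ ring an `ℝ`-algebra. -/
instance germAlgebra {α : Type*} (l : Filter α) : Algebra ℝ (Filter.Germ l ℝ) :=
  Algebra.ofModule
    (fun r x y => Filter.Germ.inductionOn₂ x y fun f g => by
      rw [← Filter.Germ.coe_smul, ← Filter.Germ.coe_mul, ← Filter.Germ.coe_mul,
        ← Filter.Germ.coe_smul, smul_mul_assoc])
    (fun r x y => Filter.Germ.inductionOn₂ x y fun f g => by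
      rw [← Filter.Germ.coe_smul, ← Filter.Germ.coe_mul, ← Filter.Germ.coe_mul,
        ← Filter.Germ.coe_smul, mul_smul_comm])

/-- The local ring `O₃` of germs at the origin of real-analytic functions `ℝ³ → ℝ`,
where `ℝ³ = ℝ × ℝ × ℝ` has coordinates `(t, x₁, x₂)`. -/
def O3 : Subalgebra ℝ (Filter.Germ (𝓝 (0 : ℝ × ℝ × ℝ)) ℝ) where
  carrier := {g | ∃ f : ℝ × ℝ × ℝ → ℝ, AnalyticAt ℝ f 0 ∧
    g = (f : Filter.Germ (𝓝 (0 : ℝ × ℝ × ℝ)) ℝ)}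
  mul_mem' := by
    rintro a b ⟨f, hf, rfl⟩ ⟨g, hg, rfl⟩
    exact ⟨f * g, hf.mul hg, (Filter.Germ.coe_mul f g).symm⟩
  add_mem' := by
    rintro a b ⟨f, hf, rfl⟩ ⟨g, hg, rfl⟩
    exact ⟨f + g, hf.add hg, (Filter.Germ.coe_add f g).symm⟩
  algebraMap_mem' := fun r => ⟨fun _ => r, analyticAt_const, by
    rw [Algebra.algebraMap_eq_smul_one, ← Filter.Germ.coe_one, ← Filter.Germ.coe_smul]
    congr 1
    funext x
    simp⟩

/-- The element of `O₃` determined by a function analytic at the origin. -/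
def toO3 (f : ℝ × ℝ × ℝ → ℝ) (hf : AnalyticAt ℝ f 0) : O3 :=
  ⟨(f : Filter.Germ (𝓝 (0 : ℝ × ℝ × ℝ)) ℝ), f, hf, rfl⟩

/-- The germ of the coordinate function `t`. -/
def tO3 : O3 := toO3 (fun p => p.1) analyticAt_fst

/-- Directional (partial) derivative of a function `ℝ³ → ℝ` in the direction `e`. -/
def pd (e : ℝ × ℝ × ℝ) (f : ℝ × ℝ × ℝ → ℝ) : ℝ × ℝ × ℝ → ℝ :=
  fun p => fderiv ℝ f p e

theorem AnalyticAt.pd {f : ℝ × ℝ × ℝ → ℝ} (hf : AnalyticAt ℝ f 0) (e : ℝ × ℝ × ℝ) :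
    AnalyticAt ℝ (pd e f) 0 :=
  ((ContinuousLinearMap.apply ℝ ℝ e).analyticAt (fderiv ℝ f 0)).comp hf.fderiv

/-- The unit vectors in the directions `t`, `x₁`, `x₂`. -/
def et : ℝ × ℝ × ℝ := (1, 0, 0)
def ex1 : ℝ × ℝ × ℝ := (0, 1, 0)
def ex2 : ℝ × ℝ × ℝ := (0, 0, 1)

/-- The Jacobian determinant `∂(u,v)/∂(y,z)` where `y, z` are the directions `e₁, e₂`. -/
def jac (e₁ e₂ : ℝ × ℝ × ℝ) (u v : ℝ × ℝ × ℝ → ℝ) : ℝ × ℝ × ℝ → ℝ :=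
  fun p => pd e₁ u p * pd e₂ v p - pd e₂ u p * pd e₁ v p

theorem AnalyticAt.jac {u v : ℝ × ℝ × ℝ → ℝ} (hu : AnalyticAt ℝ u 0)
    (hv : AnalyticAt ℝ v 0) (e₁ e₂ : ℝ × ℝ × ℝ) : AnalyticAt ℝ (jac e₁ e₂ u v) 0 :=
  ((hu.pd e₁).mul (hv.pd e₂)).sub ((hu.pd e₂).mul (hv.pd e₁))

/-- The map `σ(t, x₁, x₂) = (t², x₁, x₂)`. -/
def sigma3 : ℝ × ℝ × ℝ → ℝ × ℝ × ℝ := fun p => (p.1 ^ 2, p.2)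

theorem sigma3_zero : sigma3 0 = 0 := by simp [sigma3]

theorem sigma3_tendsto : Filter.Tendsto sigma3 (𝓝 (0 : ℝ × ℝ × ℝ)) (𝓝 (0 : ℝ × ℝ × ℝ)) := by
  have hc : Continuous sigma3 := by
    unfold sigma3; fun_prop
  simpa [sigma3_zero] using hc.tendsto (0 : ℝ × ℝ × ℝ)

theorem AnalyticAt.compSigma3 {f : ℝ × ℝ × ℝ → ℝ} (hf : AnalyticAt ℝ f 0) :
    AnalyticAt ℝ (f ∘ sigma3) 0 := by
  have hσ : AnalyticAt ℝ sigma3 0 :=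
    (analyticAt_fst.pow 2).prod analyticAt_snd
  exact AnalyticAt.comp (by rwa [sigma3_zero]) hσ

/-- Substitution `t ↦ t²` on germs at the origin, induced by `σ`. -/
def compSigmaO3 (g : O3) : O3 := by
  refine ⟨(g : Filter.Germ (𝓝 (0 : ℝ × ℝ × ℝ)) ℝ).compTendsto sigma3 sigma3_tendsto, ?_⟩
  obtain ⟨f, hf, hfg⟩ := g.2
  exact ⟨f ∘ sigma3, hf.compSigma3, by rw [hfg]; rfl⟩

section Aux

open Filter

/-- Evaluation at the origin of a germ. -/
def evG (g : Filter.Germ (𝓝 (0 : ℝ × ℝ × ℝ)) ℝ) : ℝ :=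
  Filter.Germ.liftOn g (fun f => f 0) (fun _ _ h => h.eq_of_nhds)

@[simp] theorem evG_coe (f : ℝ × ℝ × ℝ → ℝ) :
    evG (f : Filter.Germ (𝓝 (0 : ℝ × ℝ × ℝ)) ℝ) = f 0 := rfl

theorem evG_mul (a b : Filter.Germ (𝓝 (0 : ℝ × ℝ × ℝ)) ℝ) :
    evG (a * b) = evG a * evG b :=
  Filter.Germ.inductionOn₂ a b fun f g => by
    rw [← Filter.Germ.coe_mul]; rfl

theorem evG_add (a b : Filter.Germ (𝓝 (0 : ℝ × ℝ × ℝ)) ℝ) :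
    evG (a + b) = evG a + evG b :=
  Filter.Germ.inductionOn₂ a b fun f g => by
    rw [← Filter.Germ.coe_add]; rfl

/-- Evaluation at the origin as a ring homomorphism on `O3`. -/
def evO3 : O3 →+* ℝ where
  toFun g := evG g.1
  map_one' := rfl
  map_mul' a b := evG_mul a.1 b.1
  map_zero' := rfl
  map_add' a b := evG_add a.1 b.1

@[simp] theorem evO3_toO3 (f : ℝ × ℝ × ℝ → ℝ) (hf : AnalyticAt ℝ f 0) :
    evO3 (toO3 f hf) = f 0 := rfl

theorem toO3_val (f : ℝ × ℝ × ℝ → ℝ) (hf : AnalyticAt ℝ f 0) :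
    (toO3 f hf).1 = (f : Filter.Germ (𝓝 (0 : ℝ × ℝ × ℝ)) ℝ) := rfl

theorem toO3_eq_of_eventuallyEq {f g : ℝ × ℝ × ℝ → ℝ} {hf : AnalyticAt ℝ f 0}
    {hg : AnalyticAt ℝ g 0} (h : f =ᶠ[𝓝 (0 : ℝ × ℝ × ℝ)] g) : toO3 f hf = toO3 g hg :=
  Subtype.ext (Quotient.sound' h)

/-- A representative-independent evaluation: any analytic representative of an element
of `O3` evaluates at `0` to `evO3`. -/
theorem evO3_eq_of_rep {g : O3} {f : ℝ × ℝ × ℝ → ℝ}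
    (h : g.1 = (f : Filter.Germ (𝓝 (0 : ℝ × ℝ × ℝ)) ℝ)) : evO3 g = f 0 := by
  show evG g.1 = f 0
  rw [h]; rfl

theorem isUnit_of_evO3_ne_zero {g : O3} (h : evO3 g ≠ 0) : IsUnit g := by
  obtain ⟨f, hf, hval⟩ := g.2
  have hf0 : f 0 ≠ 0 := by rwa [← evO3_eq_of_rep hval]
  refine IsUnit.of_mul_eq_one (toO3 (fun p => (f p)⁻¹) (hf.inv hf0)) ?_
  have hev : ∀ᶠ p in 𝓝 (0 : ℝ × ℝ × ℝ), f p ≠ 0 :=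
    hf.continuousAt.eventually_ne hf0
  apply Subtype.ext
  show g.1 * _ = 1
  rw [hval, toO3_val, ← Filter.Germ.coe_mul, ← Filter.Germ.coe_one]
  exact Quotient.sound' (hev.mono fun p hp => by
    simp [Pi.mul_apply, mul_inv_cancel₀ hp])

/-- The maximal ideal of `O3`: germs vanishing at the origin. -/
def mO3 : Ideal O3 := RingHom.ker evO3

theorem mem_mO3 {g : O3} : g ∈ mO3 ↔ evO3 g = 0 := RingHom.mem_ker

theorem mO3_le_jacobson : mO3 ≤ Ideal.jacobson (⊥ : Ideal O3) := by
  intro x hx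
  rw [Ideal.mem_jacobson_bot]
  intro y
  apply isUnit_of_evO3_ne_zero
  rw [map_add, map_mul, (mem_mO3.1 hx), zero_mul, zero_add, map_one]
  exact one_ne_zero

end Aux
section Hadamard

open Filter

theorem hadamard {f : ℝ × ℝ × ℝ → ℝ} (hf : AnalyticAt ℝ f 0) (h0 : f 0 = 0) :
    ∃ g₁ g₂ g₃ : ℝ × ℝ × ℝ → ℝ, AnalyticAt ℝ g₁ 0 ∧ AnalyticAt ℝ g₂ 0 ∧ AnalyticAt ℝ g₃ 0 ∧
      ∀ᶠ p in 𝓝 (0 : ℝ × ℝ × ℝ), f p = p.1 * g₁ p + p.2.1 * g₂ p + p.2.2 * g₃ p := by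
  obtain ⟨p, hp⟩ := hf
  obtain ⟨r, hr⟩ := hp
  obtain ⟨ρ, hρ0, hρr⟩ := ENNReal.lt_iff_exists_nnreal_btwn.1 hr.r_pos
  set q : FormalMultilinearSeries ℝ (ℝ × ℝ × ℝ) ((ℝ × ℝ × ℝ) →L[ℝ] ℝ) := p.shift with hq
  have hqnorm : ∀ n, ‖q n‖ = ‖p (n + 1)‖ := fun n =>
    ContinuousMultilinearMap.curryRight_norm _
  have hρ0' : (0 : ℝ) < ρ := by exact_mod_cast ENNReal.coe_pos.1 hρ0
  have hsum : Summable fun n => ‖p n‖ * (ρ : ℝ) ^ n :=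
    p.summable_norm_mul_pow (lt_of_lt_of_le hρr hr.r_le)
  have hsumq : Summable fun n => ‖q n‖ * (ρ : ℝ) ^ n := by
    have h1 : Summable fun n => ‖p (n + 1)‖ * (ρ : ℝ) ^ (n + 1) :=
      (summable_nat_add_iff 1).2 hsum
    have h2 := h1.mul_right ((ρ : ℝ)⁻¹)
    refine h2.congr fun n => ?_
    have hx : (ρ : ℝ) ≠ 0 := ne_of_gt hρ0'
    rw [hqnorm n, pow_succ, mul_assoc, mul_assoc, mul_inv_cancel₀ hx, mul_one]
  set L : (ℝ × ℝ × ℝ) → ((ℝ × ℝ × ℝ) →L[ℝ] ℝ) := fun v => ∑' n, q n (fun _ => v) with hL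
  have hLsum : ∀ v : ℝ × ℝ × ℝ, ‖v‖ < ρ → HasSum (fun n => q n fun _ => v) (L v) := by
    intro v hv
    apply Summable.hasSum
    apply Summable.of_norm
    refine Summable.of_nonneg_of_le (fun n => norm_nonneg _) (fun n => ?_) hsumq
    calc ‖q n fun _ => v‖ ≤ ‖q n‖ * ∏ _i : Fin n, ‖v‖ := (q n).le_opNorm _
      _ = ‖q n‖ * ‖v‖ ^ n := by simp
      _ ≤ ‖q n‖ * (ρ : ℝ) ^ n := by
          have := hv.le
          gcongr
  have hLball : HasFPowerSeriesOnBall L q 0 ρ := by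
    refine ⟨q.le_radius_of_summable hsumq, by exact_mod_cast hρ0, ?_⟩
    intro y hy
    rw [EMetric.mem_ball, edist_zero_right] at hy
    have hy' : ‖y‖ < ρ := by exact_mod_cast hy
    simpa using hLsum y hy'
  have hLa : AnalyticAt ℝ L 0 := hLball.hasFPowerSeriesAt.analyticAt
  have hkey : ∀ v : ℝ × ℝ × ℝ, ‖v‖ < ρ → f v = L v v := by
    intro v hv
    have hvball : v ∈ Metric.eball (0 : ℝ × ℝ × ℝ) r := by
      rw [EMetric.mem_ball, edist_zero_right]
      exact lt_trans (by exact_mod_cast hv) hρr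
    have hs : HasSum (fun n => p n fun _ => v) (f v) := by simpa using hr.hasSum hvball
    have hq2 : HasSum (fun n => (q n fun _ => v) v) (L v v) := by
      have := (ContinuousLinearMap.apply ℝ ℝ v).hasSum (hLsum v hv)
      simpa using this
    have happ : ∀ n, (q n fun _ => v) v = p (n + 1) (fun _ => v) := by
      intro n
      show (p (n + 1)).curryRight _ _ = _
      rw [ContinuousMultilinearMap.curryRight_apply]
      congr 1
      funext i
      refine Fin.lastCases ?_ (fun j => ?_) i
      · simp
      · simp
    simp only [happ] at hq2
    have h1' : HasSum (fun n => p (n + 1) fun _ => v) (f v - ∑ i ∈ Finset.range 1,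
        (p i fun _ => v)) := (hasSum_nat_add_iff' 1).2 hs
    have h0' : (p 0 fun _ => v) = 0 := by
      have := hr.coeff_zero (fun _ => v)
      rw [this, h0]
    rw [Finset.sum_range_one, h0', sub_zero] at h1'
    exact h1'.unique hq2
  have hdec : ∀ v : ℝ × ℝ × ℝ, L v v = v.1 * L v et + v.2.1 * L v ex1 + v.2.2 * L v ex2 := by
    intro v
    have hv : v.1 • et + v.2.1 • ex1 + v.2.2 • ex2 = v := by
      simp [et, ex1, ex2, Prod.ext_iff]
    calc L v v = L v (v.1 • et + v.2.1 • ex1 + v.2.2 • ex2) := by rw [hv]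
      _ = v.1 * L v et + v.2.1 * L v ex1 + v.2.2 * L v ex2 := by
          simp [map_add, map_smul]
  refine ⟨fun v => L v et, fun v => L v ex1, fun v => L v ex2,
    ((ContinuousLinearMap.apply ℝ ℝ et).analyticAt (L 0)).comp hLa,
    ((ContinuousLinearMap.apply ℝ ℝ ex1).analyticAt (L 0)).comp hLa,
    ((ContinuousLinearMap.apply ℝ ℝ ex2).analyticAt (L 0)).comp hLa, ?_⟩
  have hball := Metric.ball_mem_nhds (0 : ℝ × ℝ × ℝ) hρ0'
  filter_upwards [hball] with v hv
  rw [Metric.mem_ball, dist_zero_right] at hv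
  rw [hkey v hv, hdec v]

end Hadamard
section IdealMachinery

open Filter

theorem analyticAt_x1 : AnalyticAt ℝ (fun p : ℝ × ℝ × ℝ => p.2.1) 0 :=
  analyticAt_fst.comp analyticAt_snd

theorem analyticAt_x2 : AnalyticAt ℝ (fun p : ℝ × ℝ × ℝ => p.2.2) 0 :=
  analyticAt_snd.comp analyticAt_snd

def x1O3 : O3 := toO3 (fun p => p.2.1) analyticAt_x1
def x2O3 : O3 := toO3 (fun p => p.2.2) analyticAt_x2

theorem tO3_mem : tO3 ∈ mO3 := by simp [mem_mO3, tO3]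
theorem x1O3_mem : x1O3 ∈ mO3 := by simp [mem_mO3, x1O3]
theorem x2O3_mem : x2O3 ∈ mO3 := by simp [mem_mO3, x2O3]

theorem algebraMap_O3 (x : ℝ) : algebraMap ℝ O3 x = toO3 (fun _ => x) analyticAt_const := by
  apply Subtype.ext
  show algebraMap ℝ (Filter.Germ (𝓝 (0 : ℝ × ℝ × ℝ)) ℝ) x = _
  rw [toO3_val, Algebra.algebraMap_eq_smul_one, ← Filter.Germ.coe_one, ← Filter.Germ.coe_smul]
  congr 1
  funext p
  simp

theorem evO3_algebraMap (x : ℝ) : evO3 (algebraMap ℝ O3 x) = x := by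
  rw [algebraMap_O3]; rfl

theorem mO3_eq_span : mO3 = Ideal.span {tO3, x1O3, x2O3} := by
  apply le_antisymm
  · intro g hg
    obtain ⟨f, hfa, hval⟩ := g.2
    have hf0 : f 0 = 0 := by rw [← evO3_eq_of_rep hval]; exact mem_mO3.1 hg
    obtain ⟨g₁, g₂, g₃, hg₁, hg₂, hg₃, hev⟩ := hadamard hfa hf0
    have hgeq : g = tO3 * toO3 g₁ hg₁ + x1O3 * toO3 g₂ hg₂ + x2O3 * toO3 g₃ hg₃ := by
      apply Subtype.ext
      have hrhs : (tO3 * toO3 g₁ hg₁ + x1O3 * toO3 g₂ hg₂ + x2O3 * toO3 g₃ hg₃).1 =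
          ((fun p : ℝ × ℝ × ℝ => p.1 * g₁ p + p.2.1 * g₂ p + p.2.2 * g₃ p) :
            Filter.Germ (𝓝 (0 : ℝ × ℝ × ℝ)) ℝ) := rfl
      rw [hval, hrhs]
      exact Quotient.sound' (hev.mono fun p hp => hp)
    rw [hgeq]
    have hT : tO3 ∈ Ideal.span {tO3, x1O3, x2O3} := Ideal.subset_span (by simp)
    have hX1 : x1O3 ∈ Ideal.span {tO3, x1O3, x2O3} := Ideal.subset_span (by simp)
    have hX2 : x2O3 ∈ Ideal.span {tO3, x1O3, x2O3} := Ideal.subset_span (by simp)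
    exact add_mem (add_mem (Ideal.mul_mem_right _ _ hT) (Ideal.mul_mem_right _ _ hX1))
      (Ideal.mul_mem_right _ _ hX2)
  · rw [Ideal.span_le]
    rintro g (rfl | rfl | rfl)
    · exact tO3_mem
    · exact x1O3_mem
    · exact x2O3_mem

/-- Monomials in the coordinate germs. -/
def monO3 (a b c : ℕ) : O3 := tO3 ^ a * x1O3 ^ b * x2O3 ^ c

theorem mon_mem_pow (a b c : ℕ) : monO3 a b c ∈ mO3 ^ (a + b + c) := by
  rw [pow_add, pow_add]
  exact Ideal.mul_mem_mul (Ideal.mul_mem_mul (Ideal.pow_mem_pow tO3_mem a)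
    (Ideal.pow_mem_pow x1O3_mem b)) (Ideal.pow_mem_pow x2O3_mem c)

def MonosSet (K : ℕ) : Set O3 := {g | ∃ a b c : ℕ, a + b + c = K ∧ g = monO3 a b c}

theorem pow_mO3_eq (K : ℕ) : mO3 ^ K = Ideal.span (MonosSet K) := by
  apply le_antisymm
  · induction K with
    | zero =>
      have h1 : (1 : O3) ∈ Ideal.span (MonosSet 0) :=
        Ideal.subset_span ⟨0, 0, 0, rfl, by simp [monO3]⟩
      rw [pow_zero, Ideal.one_eq_top, (Ideal.eq_top_iff_one _).2 h1]
    | succ K ih =>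
      rw [pow_succ]
      rw [Ideal.mul_le]
      intro r hr s hs
      have hr' : r ∈ Ideal.span (MonosSet K) := ih hr
      clear hr
      rw [mO3_eq_span] at hs
      induction hr' using Submodule.span_induction with
      | mem x hx =>
        obtain ⟨a, b, c, habc, rfl⟩ := hx
        induction hs using Submodule.span_induction with
        | mem y hy =>
          simp only [Set.mem_insert_iff, Set.mem_singleton_iff] at hy
          rcases hy with rfl | rfl | rfl
          · exact Ideal.subset_span ⟨a + 1, b, c, by omega, by simp only [monO3]; ring⟩
          · exact Ideal.subset_span ⟨a, b + 1, c, by omega, by simp only [monO3]; ring⟩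
          · exact Ideal.subset_span ⟨a, b, c + 1, by omega, by simp only [monO3]; ring⟩
        | zero => rw [mul_zero]; exact zero_mem _
        | add y z _ _ hy hz => rw [mul_add]; exact add_mem hy hz
        | smul d y _ hy => rw [mul_smul_comm]; exact Submodule.smul_mem _ _ hy
      | zero => rw [zero_mul]; exact zero_mem _
      | add y z _ _ hy hz => rw [add_mul]; exact add_mem hy hz
      | smul d y _ hy => rw [smul_mul_assoc]; exact Submodule.smul_mem _ _ hy
  · rw [Ideal.span_le]
    rintro g ⟨a, b, c, habc, rfl⟩
    exact habc ▸ mon_mem_pow a b c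

def USet (K : ℕ) : Set O3 := {g | ∃ a b c : ℕ, a + b + c < K ∧ g = monO3 a b c}

theorem decomp (K : ℕ) (g : O3) :
    g ∈ Submodule.span ℝ (USet K) ⊔ Submodule.restrictScalars ℝ (mO3 ^ K : Ideal O3) := by
  induction K with
  | zero =>
    apply Submodule.mem_sup_right
    show g ∈ (mO3 ^ 0 : Ideal O3)
    rw [pow_zero, Ideal.one_eq_top]
    trivial
  | succ K ih =>
    obtain ⟨s, hs, h, hh, rfl⟩ := Submodule.mem_sup.1 ih
    have hsK : s ∈ Submodule.span ℝ (USet (K + 1)) := by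
      refine Submodule.span_mono (fun x hx => ?_) hs
      obtain ⟨a, b, c, habc, rfl⟩ := hx
      exact ⟨a, b, c, by omega, rfl⟩
    have hh' : h ∈ (mO3 ^ K : Ideal O3) := hh
    rw [pow_mO3_eq] at hh'
    obtain ⟨cf, hsupp, hsum⟩ := Submodule.mem_span_set.1 hh'
    have hterm : ∀ μ ∈ cf.support, cf μ • μ ∈
        Submodule.span ℝ (USet (K + 1)) ⊔ Submodule.restrictScalars ℝ (mO3 ^ (K + 1) : Ideal O3) := by
      intro μ hμ
      obtain ⟨a, b, c, habc, rfl⟩ := hsupp hμ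
      set r := cf (monO3 a b c)
      have hsplit : r • monO3 a b c =
          (evO3 r) • monO3 a b c + monO3 a b c * (r - algebraMap ℝ O3 (evO3 r)) := by
        rw [mul_sub, smul_eq_mul, Algebra.smul_def]
        ring
      rw [hsplit]
      apply Submodule.add_mem
      · apply Submodule.mem_sup_left
        exact Submodule.smul_mem _ _ (Submodule.subset_span ⟨a, b, c, by omega, rfl⟩)
      · apply Submodule.mem_sup_right
        show _ ∈ (mO3 ^ (K + 1) : Ideal O3)
        rw [pow_succ]
        refine Ideal.mul_mem_mul ?_ ?_
        · exact habc ▸ mon_mem_pow a b c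
        · rw [mem_mO3, map_sub, evO3_algebraMap, sub_self]
    have hhmem : h ∈ Submodule.span ℝ (USet (K + 1)) ⊔
        Submodule.restrictScalars ℝ (mO3 ^ (K + 1) : Ideal O3) := by
      rw [← hsum]
      exact Submodule.sum_mem _ hterm
    exact Submodule.add_mem _ (Submodule.mem_sup_left hsK) hhmem

theorem fin_quot (Q : Ideal O3) (K : ℕ) (hQK : mO3 ^ K ≤ Q) :
    FiniteDimensional ℝ (O3 ⧸ Q) := by
  have hUfin : (USet K).Finite := by
    have hS : Set.Finite {abc : ℕ × ℕ × ℕ | abc.1 + abc.2.1 + abc.2.2 < K} := by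
      apply Set.Finite.subset (Set.finite_Iio K |>.prod ((Set.finite_Iio K).prod
        (Set.finite_Iio K)))
      rintro ⟨a, b, c⟩ h
      simp only [Set.mem_setOf_eq] at h
      exact ⟨by simp; omega, by simp; omega, by simp; omega⟩
    apply Set.Finite.subset (hS.image (fun abc => monO3 abc.1 abc.2.1 abc.2.2))
    rintro g ⟨a, b, c, habc, rfl⟩
    exact ⟨(a, b, c), habc, rfl⟩
  refine ⟨Submodule.fg_def.2 ⟨(Ideal.Quotient.mkₐ ℝ Q) '' (USet K), hUfin.image _, ?_⟩⟩
  rw [eq_top_iff]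
  rintro y -
  obtain ⟨g, rfl⟩ := Ideal.Quotient.mkₐ_surjective ℝ Q y
  obtain ⟨s, hs, h, hh, rfl⟩ := Submodule.mem_sup.1 (decomp K g)
  have hh0 : (Ideal.Quotient.mkₐ ℝ Q) h = 0 := by
    rw [Ideal.Quotient.mkₐ_eq_mk]
    exact Ideal.Quotient.eq_zero_iff_mem.2 (hQK hh)
  rw [map_add, hh0, add_zero]
  rw [show ⇑(Ideal.Quotient.mkₐ ℝ Q) '' USet K = ⇑(Ideal.Quotient.mkₐ ℝ Q).toLinearMap '' USet K from rfl, Submodule.span_image]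
  exact Submodule.mem_map_of_mem hs

set_option maxHeartbeats 2000000 in
theorem exists_pow_le (I : Ideal O3) (hfin : FiniteDimensional ℝ (O3 ⧸ I)) :
    ∃ N, mO3 ^ N ≤ I := by
  set mk := Ideal.Quotient.mk I
  have hmono : ∀ {k l : ℕ}, k ≤ l →
      Submodule.restrictScalars ℝ (Ideal.map mk (mO3 ^ l)) ≤
        Submodule.restrictScalars ℝ (Ideal.map mk (mO3 ^ k)) := by
    intro k l hkl x hx
    exact Ideal.map_mono (Ideal.pow_le_pow_right hkl) hx
  have hart : IsArtinian ℝ (O3 ⧸ I) := inferInstance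
  obtain ⟨n, hn⟩ := IsArtinian.monotone_stabilizes
    (⟨fun k => OrderDual.toDual (Submodule.restrictScalars ℝ (Ideal.map mk (mO3 ^ k))),
      fun k l hkl => hmono hkl⟩ : ℕ →o (Submodule ℝ (O3 ⧸ I))ᵒᵈ)
  have heq : Ideal.map mk (mO3 ^ (n + 1)) = Ideal.map mk (mO3 ^ n) := by
    have := hn (n + 1) (Nat.le_succ n)
    exact (Submodule.restrictScalars_injective ℝ _ _ (congrArg OrderDual.ofDual this)).symm
  set Jbar : Ideal (O3 ⧸ I) := Ideal.map mk (mO3 ^ n) with hJbar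
  have hnoeth : IsNoetherian ℝ (O3 ⧸ I) := IsNoetherian.iff_fg.2 hfin
  have hfg : Jbar.FG := by
    obtain ⟨s, hs⟩ := IsNoetherian.noetherian (Submodule.restrictScalars ℝ
      (Jbar : Ideal (O3 ⧸ I)))
    refine ⟨s, le_antisymm ?_ ?_⟩
    · rw [Ideal.span_le]
      intro x hx
      have : x ∈ Submodule.span ℝ (s : Set (O3 ⧸ I)) := Submodule.subset_span hx
      rw [hs] at this
      exact this
    · intro x hx
      have : x ∈ Submodule.span ℝ (s : Set (O3 ⧸ I)) := by rw [hs]; exact hx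
      exact Submodule.span_le_restrictScalars ℝ (O3 ⧸ I) (s : Set (O3 ⧸ I)) this
  have hjac : Ideal.map mk mO3 ≤ Ideal.jacobson (⊥ : Ideal (O3 ⧸ I)) := by
    intro x hx
    obtain ⟨a, ha, rfl⟩ := Ideal.mem_map_iff_of_surjective mk
      Ideal.Quotient.mk_surjective |>.1 hx
    refine (Ideal.mem_jacobson_bot (R := O3 ⧸ I)).2 ?_
    intro y
    obtain ⟨b, rfl⟩ := Ideal.Quotient.mk_surjective y
    have : mk a * mk b + 1 = mk (a * b + 1) := by rw [map_add, map_mul, map_one]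
    rw [this]
    refine IsUnit.map mk (isUnit_of_evO3_ne_zero ?_)
    rw [map_add, map_mul, mem_mO3.1 ha, zero_mul, zero_add, map_one]
    exact one_ne_zero
  have hbot : Jbar = ⊥ := by
    refine Submodule.eq_bot_of_le_smul_of_le_jacobson_bot (Ideal.map mk mO3) Jbar (show Submodule.FG (Jbar : Submodule (O3 ⧸ I) (O3 ⧸ I)) from hfg) ?_ hjac
    rw [Ideal.smul_eq_mul, ← Ideal.map_mul, ← pow_succ']
    rw [heq]
  refine ⟨n, ?_⟩
  have := Ideal.map_eq_bot_iff_le_ker (f := mk) (I := mO3 ^ n) |>.1 hbot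
  rwa [Ideal.mk_ker] at this

end IdealMachinery
section Phi

open Filter

theorem compTendsto_mul (a b : Filter.Germ (𝓝 (0 : ℝ × ℝ × ℝ)) ℝ) :
    (a * b).compTendsto sigma3 sigma3_tendsto =
      a.compTendsto sigma3 sigma3_tendsto * b.compTendsto sigma3 sigma3_tendsto :=
  Filter.Germ.inductionOn₂ a b fun f g => by
    rw [← Filter.Germ.coe_mul, Filter.Germ.coe_compTendsto, Filter.Germ.coe_compTendsto,
      Filter.Germ.coe_compTendsto, ← Filter.Germ.coe_mul]
    rfl

theorem compTendsto_add (a b : Filter.Germ (𝓝 (0 : ℝ × ℝ × ℝ)) ℝ) :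
    (a + b).compTendsto sigma3 sigma3_tendsto =
      a.compTendsto sigma3 sigma3_tendsto + b.compTendsto sigma3 sigma3_tendsto :=
  Filter.Germ.inductionOn₂ a b fun f g => by
    rw [← Filter.Germ.coe_add, Filter.Germ.coe_compTendsto, Filter.Germ.coe_compTendsto,
      Filter.Germ.coe_compTendsto, ← Filter.Germ.coe_add]
    rfl

/-- Substitution `t ↦ t²` as an `ℝ`-algebra homomorphism of `O3`. -/
def PhiO3 : O3 →ₐ[ℝ] O3 where
  toFun := compSigmaO3
  map_one' := by
    apply Subtype.ext
    show ((1 : O3) : Filter.Germ (𝓝 (0 : ℝ × ℝ × ℝ)) ℝ).compTendsto sigma3 sigma3_tendsto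
      = ((1 : O3) : Filter.Germ (𝓝 (0 : ℝ × ℝ × ℝ)) ℝ)
    rw [show ((1 : O3) : Filter.Germ (𝓝 (0 : ℝ × ℝ × ℝ)) ℝ) = ((1 : ℝ × ℝ × ℝ → ℝ) :
      Filter.Germ (𝓝 (0 : ℝ × ℝ × ℝ)) ℝ) from rfl, Filter.Germ.coe_compTendsto]
    rfl
  map_mul' a b := Subtype.ext (compTendsto_mul a.1 b.1)
  map_zero' := by
    apply Subtype.ext
    show ((0 : O3) : Filter.Germ (𝓝 (0 : ℝ × ℝ × ℝ)) ℝ).compTendsto sigma3 sigma3_tendsto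
      = ((0 : O3) : Filter.Germ (𝓝 (0 : ℝ × ℝ × ℝ)) ℝ)
    rw [show ((0 : O3) : Filter.Germ (𝓝 (0 : ℝ × ℝ × ℝ)) ℝ) = ((0 : ℝ × ℝ × ℝ → ℝ) :
      Filter.Germ (𝓝 (0 : ℝ × ℝ × ℝ)) ℝ) from rfl, Filter.Germ.coe_compTendsto]
    rfl
  map_add' a b := Subtype.ext (compTendsto_add a.1 b.1)
  commutes' r := by
    rw [algebraMap_O3]
    apply Subtype.ext
    show ((toO3 (fun _ => r) analyticAt_const : O3) :
      Filter.Germ (𝓝 (0 : ℝ × ℝ × ℝ)) ℝ).compTendsto sigma3 sigma3_tendsto = _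
    rw [toO3_val, Filter.Germ.coe_compTendsto]
    rfl

theorem PhiO3_toO3 (f : ℝ × ℝ × ℝ → ℝ) (hf : AnalyticAt ℝ f 0) :
    PhiO3 (toO3 f hf) = toO3 (f ∘ sigma3) hf.compSigma3 :=
  Subtype.ext (Filter.Germ.coe_compTendsto f sigma3_tendsto)

theorem toO3_neg_jac (e₁ e₂ : ℝ × ℝ × ℝ) {u v : ℝ × ℝ × ℝ → ℝ}
    (h : AnalyticAt ℝ (jac e₁ e₂ u v) 0) (h' : AnalyticAt ℝ (jac e₁ e₂ v u) 0) :
    toO3 (jac e₁ e₂ u v) h = - toO3 (jac e₁ e₂ v u) h' := by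
  apply Subtype.ext
  rw [NegMemClass.coe_neg, toO3_val, toO3_val, ← Filter.Germ.coe_neg]
  congr 1
  funext p
  simp only [jac, Pi.neg_apply]
  ring

/-- Chain rule for the `x`-Jacobian under `σ(t,x) = (t², x)`. -/
theorem jac_comp_sigma {u v : ℝ × ℝ × ℝ → ℝ} (hu : AnalyticAt ℝ u 0) (hv : AnalyticAt ℝ v 0) :
    (jac ex1 ex2 u v) ∘ sigma3 =ᶠ[𝓝 (0 : ℝ × ℝ × ℝ)]
      jac ex1 ex2 (u ∘ sigma3) (v ∘ sigma3) := by
  have hu' : ∀ᶠ p in 𝓝 (0 : ℝ × ℝ × ℝ), AnalyticAt ℝ u (sigma3 p) :=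
    sigma3_tendsto.eventually hu.eventually_analyticAt
  have hv' : ∀ᶠ p in 𝓝 (0 : ℝ × ℝ × ℝ), AnalyticAt ℝ v (sigma3 p) :=
    sigma3_tendsto.eventually hv.eventually_analyticAt
  filter_upwards [hu', hv'] with p hup hvp
  have h1 : HasFDerivAt (fun q : ℝ × ℝ × ℝ => q.1 ^ 2)
      (p.1 • ContinuousLinearMap.fst ℝ ℝ (ℝ × ℝ) + p.1 • ContinuousLinearMap.fst ℝ ℝ (ℝ × ℝ))
      p := by
    have h1' : HasFDerivAt (fun q : ℝ × ℝ × ℝ => q.1 * q.1)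
        (p.1 • ContinuousLinearMap.fst ℝ ℝ (ℝ × ℝ) + p.1 • ContinuousLinearMap.fst ℝ ℝ (ℝ × ℝ))
        p := hasFDerivAt_fst.mul hasFDerivAt_fst
    simpa only [pow_two] using h1'
  have hσd : HasFDerivAt sigma3
      (((p.1 • ContinuousLinearMap.fst ℝ ℝ (ℝ × ℝ) +
        p.1 • ContinuousLinearMap.fst ℝ ℝ (ℝ × ℝ))).prod
        (ContinuousLinearMap.snd ℝ ℝ (ℝ × ℝ))) p := h1.prodMk hasFDerivAt_snd
  set D := (((p.1 • ContinuousLinearMap.fst ℝ ℝ (ℝ × ℝ) +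
    p.1 • ContinuousLinearMap.fst ℝ ℝ (ℝ × ℝ))).prod
    (ContinuousLinearMap.snd ℝ ℝ (ℝ × ℝ))) with hD
  have hDx1 : D ex1 = ex1 := by
    simp [hD, ContinuousLinearMap.prod_apply, ex1, Prod.ext_iff]
  have hDx2 : D ex2 = ex2 := by
    simp [hD, ContinuousLinearMap.prod_apply, ex2, Prod.ext_iff]
  have key : ∀ (w : ℝ × ℝ × ℝ → ℝ), AnalyticAt ℝ w (sigma3 p) → ∀ e : ℝ × ℝ × ℝ,
      D e = e → pd e (w ∘ sigma3) p = pd e w (sigma3 p) := by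
    intro w hw e he
    show fderiv ℝ (w ∘ sigma3) p e = fderiv ℝ w (sigma3 p) e
    rw [fderiv_comp p hw.differentiableAt hσd.differentiableAt, hσd.fderiv,
      ContinuousLinearMap.comp_apply, he]
  show jac ex1 ex2 u v (sigma3 p) = jac ex1 ex2 (u ∘ sigma3) (v ∘ sigma3) p
  simp only [jac]
  rw [key u hup ex1 hDx1, key u hup ex2 hDx2, key v hvp ex1 hDx1, key v hvp ex2 hDx2]

theorem PhiO3_tO3 : PhiO3 tO3 = tO3 ^ 2 := by
  rw [show tO3 = toO3 (fun p => p.1) analyticAt_fst from rfl, PhiO3_toO3]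
  apply Subtype.ext
  rw [toO3_val]
  show ((((fun p : ℝ × ℝ × ℝ => p.1) ∘ sigma3) : ℝ × ℝ × ℝ → ℝ) :
    Filter.Germ (𝓝 (0 : ℝ × ℝ × ℝ)) ℝ) = (((tO3 : O3) : Filter.Germ (𝓝 (0 : ℝ × ℝ × ℝ)) ℝ)) ^ 2
  rw [show (((tO3 : O3) : Filter.Germ (𝓝 (0 : ℝ × ℝ × ℝ)) ℝ)) =
    ((fun p : ℝ × ℝ × ℝ => p.1 : ℝ × ℝ × ℝ → ℝ) : Filter.Germ (𝓝 (0 : ℝ × ℝ × ℝ)) ℝ) from rfl,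
    ← Filter.Germ.coe_pow]
  rfl

theorem PhiO3_x1O3 : PhiO3 x1O3 = x1O3 := by
  rw [show x1O3 = toO3 (fun p => p.2.1) analyticAt_x1 from rfl, PhiO3_toO3]
  exact Subtype.ext rfl

theorem PhiO3_x2O3 : PhiO3 x2O3 = x2O3 := by
  rw [show x2O3 = toO3 (fun p => p.2.2) analyticAt_x2 from rfl, PhiO3_toO3]
  exact Subtype.ext rfl

end Phi
/-- Let `f = (f₁,f₂) : ℝ×ℝ², 0 → ℝ², 0` be an analytic map germ, with
`J = ∂(f₁,f₂)/∂(x₁,x₂)`, `F_i = ∂(f_i,J)/∂(x₁,x₂)`, and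
`I' = ⟨J, F₁, F₂, ∂(F₁,J)/∂(x₁,x₂), ∂(F₂,J)/∂(x₁,x₂)⟩` with `dim_ℝ O₃/I' < ∞`.
Define `J'(t,x) = J(t²,x)` and `F_i'(t,x) = F_i(t²,x)`. Then both `V(J,F₁,F₂)` and
`V(J',F₁',F₂')` are curves with an algebraically isolated singularity at the origin: the
ideal `L₀` generated by `J, F₁, F₂` and all 2×2 minors of the Jacobian matrix of
`(J,F₁,F₂)` with respect to `(t,x₁,x₂)` satisfies `dim_ℝ O₃/L₀ < ∞`, and likewise for the
ideal `L` built from `J', F₁', F₂'`. -/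
theorem curves_algebraically_isolated
    (f₁ f₂ : ℝ × ℝ × ℝ → ℝ)
    (h₁ : AnalyticAt ℝ f₁ 0) (h₂ : AnalyticAt ℝ f₂ 0)
    (hz₁ : f₁ 0 = 0) (hz₂ : f₂ 0 = 0)
    (J F₁ F₂ : ℝ × ℝ × ℝ → ℝ)
    (hJdef : J = jac ex1 ex2 f₁ f₂)
    (hF₁def : F₁ = jac ex1 ex2 f₁ J) (hF₂def : F₂ = jac ex1 ex2 f₂ J)
    (hJa : AnalyticAt ℝ J 0) (hF₁a : AnalyticAt ℝ F₁ 0) (hF₂a : AnalyticAt ℝ F₂ 0)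
    (I' : Ideal O3)
    (hI'def : I' = Ideal.span {toO3 J hJa, toO3 F₁ hF₁a, toO3 F₂ hF₂a,
      toO3 (jac ex1 ex2 F₁ J) (hF₁a.jac hJa ex1 ex2),
      toO3 (jac ex1 ex2 F₂ J) (hF₂a.jac hJa ex1 ex2)})
    (hI'fin : FiniteDimensional ℝ (O3 ⧸ I'))
    (L₀ L : Ideal O3)
    (hL₀def : L₀ = Ideal.span {toO3 J hJa, toO3 F₁ hF₁a, toO3 F₂ hF₂a,
      toO3 (jac et ex1 J F₁) (hJa.jac hF₁a et ex1),
      toO3 (jac et ex2 J F₁) (hJa.jac hF₁a et ex2),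
      toO3 (jac ex1 ex2 J F₁) (hJa.jac hF₁a ex1 ex2),
      toO3 (jac et ex1 J F₂) (hJa.jac hF₂a et ex1),
      toO3 (jac et ex2 J F₂) (hJa.jac hF₂a et ex2),
      toO3 (jac ex1 ex2 J F₂) (hJa.jac hF₂a ex1 ex2),
      toO3 (jac et ex1 F₁ F₂) (hF₁a.jac hF₂a et ex1),
      toO3 (jac et ex2 F₁ F₂) (hF₁a.jac hF₂a et ex2),
      toO3 (jac ex1 ex2 F₁ F₂) (hF₁a.jac hF₂a ex1 ex2)})
    (hLdef : L = Ideal.span {toO3 (J ∘ sigma3) hJa.compSigma3,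
      toO3 (F₁ ∘ sigma3) hF₁a.compSigma3, toO3 (F₂ ∘ sigma3) hF₂a.compSigma3,
      toO3 (jac et ex1 (J ∘ sigma3) (F₁ ∘ sigma3))
        (hJa.compSigma3.jac hF₁a.compSigma3 et ex1),
      toO3 (jac et ex2 (J ∘ sigma3) (F₁ ∘ sigma3))
        (hJa.compSigma3.jac hF₁a.compSigma3 et ex2),
      toO3 (jac ex1 ex2 (J ∘ sigma3) (F₁ ∘ sigma3))
        (hJa.compSigma3.jac hF₁a.compSigma3 ex1 ex2),
      toO3 (jac et ex1 (J ∘ sigma3) (F₂ ∘ sigma3))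
        (hJa.compSigma3.jac hF₂a.compSigma3 et ex1),
      toO3 (jac et ex2 (J ∘ sigma3) (F₂ ∘ sigma3))
        (hJa.compSigma3.jac hF₂a.compSigma3 et ex2),
      toO3 (jac ex1 ex2 (J ∘ sigma3) (F₂ ∘ sigma3))
        (hJa.compSigma3.jac hF₂a.compSigma3 ex1 ex2),
      toO3 (jac et ex1 (F₁ ∘ sigma3) (F₂ ∘ sigma3))
        (hF₁a.compSigma3.jac hF₂a.compSigma3 et ex1),
      toO3 (jac et ex2 (F₁ ∘ sigma3) (F₂ ∘ sigma3))
        (hF₁a.compSigma3.jac hF₂a.compSigma3 et ex2),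
      toO3 (jac ex1 ex2 (F₁ ∘ sigma3) (F₂ ∘ sigma3))
        (hF₁a.compSigma3.jac hF₂a.compSigma3 ex1 ex2)}) :
    FiniteDimensional ℝ (O3 ⧸ L₀) ∧ FiniteDimensional ℝ (O3 ⧸ L) := by
  obtain ⟨N, hN⟩ := exists_pow_le I' hI'fin
  have hI'L₀ : I' ≤ L₀ := by
    rw [hI'def, hL₀def, Ideal.span_le]
    intro g hg
    simp only [Set.mem_insert_iff, Set.mem_singleton_iff] at hg
    rcases hg with rfl | rfl | rfl | rfl | rfl
    · exact Ideal.subset_span (by simp)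
    · exact Ideal.subset_span (by simp)
    · exact Ideal.subset_span (by simp)
    · rw [toO3_neg_jac ex1 ex2 (hF₁a.jac hJa ex1 ex2) (hJa.jac hF₁a ex1 ex2)]
      exact neg_mem (Ideal.subset_span (by simp))
    · rw [toO3_neg_jac ex1 ex2 (hF₂a.jac hJa ex1 ex2) (hJa.jac hF₂a ex1 ex2)]
      exact neg_mem (Ideal.subset_span (by simp))
  have hmapL : ∀ x ∈ I', PhiO3 x ∈ L := by
    have hle : Ideal.map (PhiO3.toRingHom : O3 →+* O3) I' ≤ L := by
      rw [hI'def, Ideal.map_span, Ideal.span_le]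
      rintro y ⟨x, hx, rfl⟩
      simp only [Set.mem_insert_iff, Set.mem_singleton_iff] at hx
      have hco : ∀ (f : ℝ × ℝ × ℝ → ℝ) (hf : AnalyticAt ℝ f 0),
          PhiO3.toRingHom (toO3 f hf) = toO3 (f ∘ sigma3) hf.compSigma3 := fun f hf =>
        PhiO3_toO3 f hf
      rcases hx with rfl | rfl | rfl | rfl | rfl
      · rw [hco]; rw [hLdef]; exact Ideal.subset_span (by simp)
      · rw [hco]; rw [hLdef]; exact Ideal.subset_span (by simp)
      · rw [hco]; rw [hLdef]; exact Ideal.subset_span (by simp)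
      · rw [hco]
        rw [toO3_eq_of_eventuallyEq (hf := (hF₁a.jac hJa ex1 ex2).compSigma3)
          (hg := (hF₁a.compSigma3).jac (hJa.compSigma3) ex1 ex2)
          (jac_comp_sigma hF₁a hJa),
          toO3_neg_jac ex1 ex2 _ ((hJa.compSigma3).jac (hF₁a.compSigma3) ex1 ex2)]
        rw [hLdef]
        exact neg_mem (Ideal.subset_span (by simp))
      · rw [hco]
        rw [toO3_eq_of_eventuallyEq (hf := (hF₂a.jac hJa ex1 ex2).compSigma3)
          (hg := (hF₂a.compSigma3).jac (hJa.compSigma3) ex1 ex2)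
          (jac_comp_sigma hF₂a hJa),
          toO3_neg_jac ex1 ex2 _ ((hJa.compSigma3).jac (hF₂a.compSigma3) ex1 ex2)]
        rw [hLdef]
        exact neg_mem (Ideal.subset_span (by simp))
    intro x hx
    exact hle (Ideal.mem_map_of_mem _ hx)
  constructor
  · exact fin_quot L₀ N (hN.trans hI'L₀)
  · apply fin_quot L (2 * N + 1)
    rw [pow_mO3_eq, Ideal.span_le]
    rintro g ⟨a, b, c, habc, rfl⟩
    have hmon : ∀ a' b' c' : ℕ, N ≤ a' + b' + c' → PhiO3 (monO3 a' b' c') ∈ L := by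
      intro a' b' c' hdeg
      apply hmapL
      apply hN
      exact Ideal.pow_le_pow_right hdeg (mon_mem_pow a' b' c')
    have hPhimon : ∀ a' b' c' : ℕ,
        PhiO3 (monO3 a' b' c') = (tO3 ^ 2) ^ a' * x1O3 ^ b' * x2O3 ^ c' := by
      intro a' b' c'
      simp only [monO3, map_mul, map_pow, PhiO3_tO3, PhiO3_x1O3, PhiO3_x2O3]
    rcases Nat.even_or_odd a with ⟨a', rfl⟩ | ⟨a', rfl⟩
    · have hdeg : N ≤ a' + b + c := by omega
      have : monO3 (a' + a') b c = PhiO3 (monO3 a' b c) := by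
        rw [hPhimon, monO3, ← pow_mul]
        ring_nf
      rw [this]
      exact hmon a' b c hdeg
    · have hdeg : N ≤ a' + b + c := by omega
      have : monO3 (2 * a' + 1) b c = tO3 * PhiO3 (monO3 a' b c) := by
        rw [hPhimon, monO3, ← pow_mul]
        ring
      rw [this]
      exact Ideal.mul_mem_left _ _ (hmon a' b c hdeg)

end
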